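/- A regular ordered semigroup S is bi-simple (has no proper bi-ideal) if and only if B(e) = B(f) for all ordered idempotents e, f of S. -/
import Mathlib


open Pointwise

variable {S : Type*} [Semigroup S] [PartialOrder S]
  [CovariantClass S S (· * ·) (· ≤ ·)]
  [CovariantClass S S (Function.swap (· * ·)) (· ≤ ·)]

/-- The downward closure `(H] = {t : t ≤ h for some h ∈ H}`. -/
def ocl (H : Set S) : Set S := {t | ∃ h ∈ H, t ≤ h}
/-- Principal left ideal `L(a) = (a ∪ Sa]`. -/
def pL (a : S) : Set S := ocl ({a} ∪ Set.univ * {a})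
/-- Principal right ideal `R(a) = (a ∪ aS]`. -/
def pR (a : S) : Set S := ocl ({a} ∪ {a} * Set.univ)
/-- Principal bi-ideal `B(a) = (a ∪ a² ∪ aSa]`. -/
def pB (a : S) : Set S := ocl ({a} ∪ {a * a} ∪ {a} * Set.univ * {a})
def LIdeal (I : Set S) : Prop := I.Nonempty ∧ Set.univ * I ⊆ I ∧ ocl I = I
def RIdeal (I : Set S) : Prop := I.Nonempty ∧ I * Set.univ ⊆ I ∧ ocl I = I
def BIdeal (B : Set S) : Prop :=
  B.Nonempty ∧ B * B ⊆ B ∧ B * Set.univ * B ⊆ B ∧ ocl B = B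
def MinBIdeal (B : Set S) : Prop :=
  BIdeal B ∧ ∀ K : Set S, BIdeal K → K ⊆ B → K = B
def MinLIdeal (I : Set S) : Prop :=
  LIdeal I ∧ ∀ K : Set S, LIdeal K → K ⊆ I → K = I
def MinRIdeal (I : Set S) : Prop :=
  RIdeal I ∧ ∀ K : Set S, RIdeal K → K ⊆ I → K = I
def OrdRegular (S : Type*) [Semigroup S] [PartialOrder S] : Prop :=
  ∀ a : S, ∃ s : S, a ≤ a * s * a
def ComplRegular (S : Type*) [Semigroup S] [PartialOrder S] : Prop :=
  ∀ a : S, ∃ s : S, a ≤ a * a * s * (a * a)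
/-- Green's H relation. -/
def HGreen (a b : S) : Prop := pL a = pL b ∧ pR a = pR b
/-- The relation β : `a β b` iff `B(a) = B(b)`. -/
def betaRel (a b : S) : Prop := pB a = pB b

lemma ocl_ocl (H : Set S) : ocl (ocl H) = ocl H := by
  ext t
  constructor
  · rintro ⟨u, ⟨v, hv, huv⟩, htu⟩
    exact ⟨v, hv, le_trans htu huv⟩
  · intro ht
    exact ⟨t, ht, le_refl t⟩

lemma mem_aSa (a s : S) : a * s * a ∈ ({a} : Set S) * Set.univ * {a} :=
  Set.mul_mem_mul (Set.mul_mem_mul rfl trivial) rfl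

lemma gen_right {a g : S} (hg : g ∈ ({a} ∪ {a * a} ∪ {a} * Set.univ * {a} : Set S)) :
    g = a ∨ ∃ s, g = a * s := by
  rcases hg with (hg | hg) | hg
  · exact Or.inl hg
  · exact Or.inr ⟨a, hg⟩
  · obtain ⟨u, hu, v, hv, rfl⟩ := hg
    obtain ⟨p, hp, q, -, rfl⟩ := hu
    rw [Set.mem_singleton_iff] at hp hv
    exact Or.inr ⟨q * a, by simp [hp, hv, mul_assoc]⟩

lemma gen_left {a g : S} (hg : g ∈ ({a} ∪ {a * a} ∪ {a} * Set.univ * {a} : Set S)) :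
    g = a ∨ ∃ s, g = s * a := by
  rcases hg with (hg | hg) | hg
  · exact Or.inl hg
  · exact Or.inr ⟨a, hg⟩
  · obtain ⟨u, hu, v, hv, rfl⟩ := hg
    rw [Set.mem_singleton_iff] at hv
    exact Or.inr ⟨u, by rw [hv]⟩

lemma mem_pB_self (a : S) : a ∈ pB a :=
  ⟨a, Or.inl (Or.inl rfl), le_refl a⟩

lemma pB_BIdeal (a : S) : BIdeal (pB a) := by
  refine ⟨⟨a, mem_pB_self a⟩, ?_, ?_, ocl_ocl _⟩
  · rintro z ⟨u, ⟨g₁, hg₁, hu⟩, v, ⟨g₂, hg₂, hv⟩, rfl⟩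
    refine ⟨g₁ * g₂, ?_, mul_le_mul' hu hv⟩
    rcases gen_right hg₁ with h1 | ⟨s, h1⟩ <;> rcases gen_left hg₂ with h2 | ⟨t, h2⟩ <;>
        rw [h1, h2]
    · exact Or.inl (Or.inr rfl)
    · exact Or.inr (by simpa [mul_assoc] using mem_aSa a t)
    · exact Or.inr (by simpa [mul_assoc] using mem_aSa a s)
    · exact Or.inr (by simpa [mul_assoc] using mem_aSa a (s * t))
  · rintro z ⟨w, ⟨u, ⟨g₁, hg₁, hu⟩, x, -, rfl⟩, v, ⟨g₂, hg₂, hv⟩, rfl⟩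
    refine ⟨g₁ * x * g₂, ?_, mul_le_mul' (mul_le_mul' hu le_rfl) hv⟩
    rcases gen_right hg₁ with h1 | ⟨s, h1⟩ <;> rcases gen_left hg₂ with h2 | ⟨t, h2⟩ <;>
        rw [h1, h2]
    · exact Or.inr (by simpa [mul_assoc] using mem_aSa a x)
    · exact Or.inr (by simpa [mul_assoc] using mem_aSa a (x * t))
    · exact Or.inr (by simpa [mul_assoc] using mem_aSa a (s * x))
    · exact Or.inr (by simpa [mul_assoc] using mem_aSa a (s * (x * t)))

lemma pB_right {b y t : S} (ht : t ∈ pB (b * y)) : ∃ w, t ≤ b * w := by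
  obtain ⟨g, hg, hle⟩ := ht
  rcases gen_right hg with rfl | ⟨s, rfl⟩
  · exact ⟨y, hle⟩
  · exact ⟨y * s, by rwa [← mul_assoc]⟩

lemma pB_left {b y t : S} (ht : t ∈ pB (y * b)) : ∃ w, t ≤ w * b := by
  obtain ⟨g, hg, hle⟩ := ht
  rcases gen_left hg with rfl | ⟨s, rfl⟩
  · exact ⟨y, hle⟩
  · exact ⟨s * y, by rwa [mul_assoc]⟩

theorem stmt15 (h : OrdRegular S) :
    (∀ B : Set S, BIdeal B → B = Set.univ) ↔
      ∀ e f : S, e ≤ e * e → f ≤ f * f → pB e = pB f := by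
  constructor
  · intro hall e f _ _
    rw [hall _ (pB_BIdeal e), hall _ (pB_BIdeal f)]
  · intro he B hB
    apply Set.eq_univ_of_forall
    intro a
    obtain ⟨b, hb⟩ := hB.1
    obtain ⟨x, hx⟩ := h a
    obtain ⟨y, hy⟩ := h b
    have hax : a * x ≤ (a * x) * (a * x) := by
      have := mul_le_mul_left hx x
      simpa [mul_assoc] using this
    have hxa : x * a ≤ (x * a) * (x * a) := by
      have := mul_le_mul_right hx x
      simpa [mul_assoc] using this
    have hby : b * y ≤ (b * y) * (b * y) := by
      have := mul_le_mul_left hy y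
      simpa [mul_assoc] using this
    have hyb : y * b ≤ (y * b) * (y * b) := by
      have := mul_le_mul_right hy y
      simpa [mul_assoc] using this
    obtain ⟨w₁, hw₁⟩ : ∃ w, a * x ≤ b * w :=
      pB_right (he (a * x) (b * y) hax hby ▸ mem_pB_self (a * x))
    obtain ⟨w₂, hw₂⟩ : ∃ w, x * a ≤ w * b :=
      pB_left (he (x * a) (y * b) hxa hyb ▸ mem_pB_self (x * a))
    have key : a ≤ (a * x) * a * (x * a) := by
      calc a ≤ a * x * a := hx
        _ ≤ a * x * (a * x * a) := by
              have := mul_le_mul_right hx (a * x); simpa [mul_assoc] using this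
        _ = (a * x) * a * (x * a) := by simp [mul_assoc]
    have key2 : a ≤ b * (w₁ * a * w₂) * b := by
      calc a ≤ (a * x) * a * (x * a) := key
        _ ≤ (b * w₁) * a * (w₂ * b) := mul_le_mul' (mul_le_mul' hw₁ le_rfl) hw₂
        _ = b * (w₁ * a * w₂) * b := by simp [mul_assoc]
    have hmem : b * (w₁ * a * w₂) * b ∈ B :=
      hB.2.2.1 (Set.mul_mem_mul (Set.mul_mem_mul hb trivial) hb)
    rw [← hB.2.2.2]
    exact ⟨_, hmem, key2⟩
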